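/- Let A, B ∈ 𝔽^{4×4} be such that all off-diagonal entries of A are nonzero and A ≡PME B. Let X ⊆ {1,2,3,4} with |X| = 2 be such that D₁(A,B) = X and D₂(A,B) = X̄. Then X is a cut of A. -/

import Mathlib

/-!
Diagonal similarity preserves the cycle products `A x y * A y z * A z x`, and principal minor
equivalence preserves the diagonal and the products `A p q * A q p`. Write `X = {σ 0, σ 1}` for a
permutation `σ`. Then `B` has the 3-cycle products of `A` on `{σ 1, σ 2, σ 3}` and
`{σ 0, σ 2, σ 3}`, and the reversed ones on the other two triples, while `σ 0 ∉ D₂` and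
`σ 2 ∉ D₁` say that the two orientations of the 3-cycle of `A` on `{σ 1, σ 2, σ 3}`, resp.
`{σ 0, σ 1, σ 3}`, differ. These data determine `B` up to diagonal similarity, so
`det A = det B` becomes a polynomial identity in the entries of `A`; together with the
consistency of the 3-cycles of `B` it forces both `2 × 2` blocks `A[X, X̄]` and `A[X̄, X]` to be
singular.
-/

namespace PMAP

open Matrix

variable {K : Type*}

/-- The submatrix of a square matrix `A` with rows indexed by `S` and columns indexed by `T`. -/
def subm {m : Type*} (A : Matrix m m K) (S T : Finset m) : Matrix S T K :=
  Matrix.of fun i j => A i.1 j.1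

/-- The principal minor of `A` indexed by `S`. -/
noncomputable def pminor {m : Type*} [DecidableEq m] [CommRing K]
    (A : Matrix m m K) (S : Finset m) : K :=
  (subm A S S).det

/-- `A` and `B` are principal minor equivalent. -/
def PME {m : Type*} [DecidableEq m] [CommRing K] (A B : Matrix m m K) : Prop :=
  ∀ S : Finset m, S.Nonempty → pminor A S = pminor B S

/-- `A` and `B` are principal minor equivalent up to order `k`. -/
def PMEupto {m : Type*} [DecidableEq m] [CommRing K] (k : ℕ) (A B : Matrix m m K) : Prop :=
  ∀ S : Finset m, S.Nonempty → S.card ≤ k → pminor A S = pminor B S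

/-- `X` is a cut of the principal submatrix `A[I]`. -/
def IsCutOn {m : Type*} [DecidableEq m] [Field K] (A : Matrix m m K) (I X : Finset m) : Prop :=
  X ⊆ I ∧ 2 ≤ X.card ∧ X.card + 2 ≤ I.card ∧
    (subm A X (I \ X)).rank ≤ 1 ∧ (subm A (I \ X) X).rank ≤ 1

/-- `X` is a cut of `A`. -/
def IsCut {m : Type*} [Fintype m] [DecidableEq m] [Field K] (A : Matrix m m K)
    (X : Finset m) : Prop :=
  IsCutOn A Finset.univ X

/-- Property `R`: all off-diagonal entries are nonzero, and every rank-one `2×2`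
submatrix `A[{i,j},{k,ℓ}]` (with `i,j,k,ℓ` distinct) extends to a rank-one submatrix
`A[X, Xᶜ]` with `i,j ∈ X` and `k,ℓ ∈ Xᶜ`. -/
def PropR {m : Type*} [Fintype m] [DecidableEq m] [Field K] (A : Matrix m m K) : Prop :=
  (∀ i j : m, i ≠ j → A i j ≠ 0) ∧
    ∀ i j k l : m, i ≠ j → i ≠ k → i ≠ l → j ≠ k → j ≠ l → k ≠ l →
      (subm A {i, j} {k, l}).rank = 1 →
      ∃ X : Finset m, i ∈ X ∧ j ∈ X ∧ k ∉ X ∧ l ∉ X ∧ (subm A X Xᶜ).rank = 1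

/-- `A` is diagonally similar to `B`: `B = D⁻¹ A D` for an invertible diagonal matrix `D`. -/
def DiagSim {m : Type*} [Field K] (A B : Matrix m m K) : Prop :=
  ∃ D : m → K, (∀ i, D i ≠ 0) ∧ ∀ i j, B i j = (D i)⁻¹ * A i j * D j

/-- The set `D₁(A,B)` of indices `i` with `A[[n]∖{i}]` diagonally similar to `B[[n]∖{i}]`. -/
def D1 {n : ℕ} [Field K] (A B : Matrix (Fin n) (Fin n) K) : Set (Fin n) :=
  {i | DiagSim (subm A {i}ᶜ {i}ᶜ) (subm B {i}ᶜ {i}ᶜ)}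

/-- The set `D₂(A,B)` of indices `i` with `A[[n]∖{i}]` diagonally similar to `B[[n]∖{i}]ᵀ`. -/
def D2 {n : ℕ} [Field K] (A B : Matrix (Fin n) (Fin n) K) : Set (Fin n) :=
  {i | DiagSim (subm A {i}ᶜ {i}ᶜ) (subm B {i}ᶜ {i}ᶜ)ᵀ}

/-- The pair `{{i,j},{k,l}}` satisfies property `P` for `A`: there is a matrix `C`
principal minor equivalent to `A[{i,j,k,l}]` in which `{i,j}` is a cut. -/
def PropP {n : ℕ} [Field K] (A : Matrix (Fin n) (Fin n) K) (i j k l : Fin n) : Prop :=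
  ∃ C : Matrix (Fin n) (Fin n) K,
    (∀ S : Finset (Fin n), S.Nonempty → S ⊆ {i, j, k, l} → pminor C S = pminor A S) ∧
    IsCutOn C {i, j, k, l} {i, j}

/-- `A` is irreducible: it cannot be brought to block upper triangular form
by a simultaneous permutation of rows and columns. -/
def Irred {m : Type*} [Fintype m] [Zero K] (A : Matrix m m K) : Prop :=
  ∀ S : Finset m, S.Nonempty → S ≠ Finset.univ → ∃ i, i ∉ S ∧ ∃ j ∈ S, A i j ≠ 0

section

variable [CommRing K] {m n : Type*}

def cycle3 (A : Matrix m m K) (x y z : m) : K :=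
  A x y * A y z * A z x

theorem det_fin_four (A : Matrix (Fin 4) (Fin 4) K) :
    A.det =
      A 0 0 * (A 1 1 * A 2 2 * A 3 3 - A 1 1 * A 2 3 * A 3 2 - A 1 2 * A 2 1 * A 3 3
        + A 1 2 * A 2 3 * A 3 1 + A 1 3 * A 2 1 * A 3 2 - A 1 3 * A 2 2 * A 3 1)
      - A 0 1 * (A 1 0 * A 2 2 * A 3 3 - A 1 0 * A 2 3 * A 3 2 - A 1 2 * A 2 0 * A 3 3
        + A 1 2 * A 2 3 * A 3 0 + A 1 3 * A 2 0 * A 3 2 - A 1 3 * A 2 2 * A 3 0)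
      + A 0 2 * (A 1 0 * A 2 1 * A 3 3 - A 1 0 * A 2 3 * A 3 1 - A 1 1 * A 2 0 * A 3 3
        + A 1 1 * A 2 3 * A 3 0 + A 1 3 * A 2 0 * A 3 1 - A 1 3 * A 2 1 * A 3 0)
      - A 0 3 * (A 1 0 * A 2 1 * A 3 2 - A 1 0 * A 2 2 * A 3 1 - A 1 1 * A 2 0 * A 3 2
        + A 1 1 * A 2 2 * A 3 0 + A 1 2 * A 2 0 * A 3 1 - A 1 2 * A 2 1 * A 3 0) := by
  rw [Matrix.det_succ_row_zero, Fin.sum_univ_four]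
  simp only [Matrix.det_fin_three, Matrix.submatrix_apply, Fin.succAbove, Fin.reduceSucc,
    Fin.reduceCastSucc, Fin.reduceLT, ↓reduceIte, Fin.isValue, Fin.coe_ofNat_eq_mod]
  ring

variable [DecidableEq m]

theorem pminor_image (A : Matrix m m K) {k : ℕ} {v : Fin k → m} (hv : Function.Injective v) :
    pminor A (Finset.univ.image v) = (A.submatrix v v).det := by
  let e : Fin k ≃ Finset.univ.image v :=
    Equiv.ofBijective (fun a => ⟨v a, Finset.mem_image_of_mem v (Finset.mem_univ a)⟩)
      ⟨fun a b h => hv (congrArg Subtype.val h), fun ⟨x, hx⟩ => by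
        obtain ⟨a, -, rfl⟩ := Finset.mem_image.1 hx
        exact ⟨a, rfl⟩⟩
  rw [pminor, ← Matrix.det_submatrix_equiv_self e]
  rfl

theorem pminor_singleton (A : Matrix m m K) (p : m) : pminor A {p} = A p p := by
  have hS : Finset.univ.image ![p] = {p} := by
    ext x; simp [eq_comm]
  rw [← hS, pminor_image A (Function.injective_of_subsingleton _), Matrix.det_fin_one]
  rfl

theorem pminor_pair (A : Matrix m m K) {p q : m} (h : p ≠ q) :
    pminor A {p, q} = A p p * A q q - A p q * A q p := by
  have hv : Function.Injective ![p, q] := by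
    intro a b; fin_cases a <;> fin_cases b <;> simp [h, h.symm]
  have hS : Finset.univ.image ![p, q] = {p, q} := by
    ext x; simp [Fin.exists_fin_two, eq_comm]
  rw [← hS, pminor_image A hv, Matrix.det_fin_two]
  rfl

theorem pminor_univ [Fintype m] (A : Matrix m m K) : pminor A Finset.univ = A.det :=
  Matrix.det_submatrix_equiv_self (Equiv.subtypeUnivEquiv Finset.mem_univ) A

theorem pminor_submatrix [DecidableEq n] (A : Matrix m m K) (e : n ≃ m) (S : Finset n) :
    pminor (A.submatrix e e) S = pminor A (S.map e.toEmbedding) := by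
  let f : S ≃ S.map e.toEmbedding := e.subtypeEquiv fun a => by simp
  rw [pminor, pminor, ← Matrix.det_submatrix_equiv_self f]
  rfl

namespace PME

variable {A B : Matrix m m K}

theorem diag_eq (h : PME A B) (p : m) : B p p = A p p := by
  simpa [pminor_singleton] using (h {p} (Finset.singleton_nonempty p)).symm

theorem mul_swap_eq (h : PME A B) (p q : m) : B p q * B q p = A p q * A q p := by
  by_cases hpq : p = q
  · subst hpq; rw [h.diag_eq]
  · have := h {p, q} (Finset.insert_nonempty p {q})
    rw [pminor_pair A hpq, pminor_pair B hpq, h.diag_eq, h.diag_eq] at this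
    linear_combination this

theorem det_eq [Fintype m] [Nonempty m] (h : PME A B) : B.det = A.det := by
  simpa [pminor_univ] using (h Finset.univ Finset.univ_nonempty).symm

theorem submatrix [DecidableEq n] (h : PME A B) (e : n ≃ m) :
    PME (A.submatrix e e) (B.submatrix e e) := fun S hS => by
  rw [pminor_submatrix, pminor_submatrix]
  exact h _ hS.map

end PME

end

section

variable [Field K] {m : Type*}

namespace DiagSim

theorem trans {L M N : Matrix m m K} (h₁ : DiagSim L M) (h₂ : DiagSim M N) : DiagSim L N := by
  obtain ⟨D, hD, hM⟩ := h₁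
  obtain ⟨E, hE, hN⟩ := h₂
  refine ⟨fun i => D i * E i, fun i => mul_ne_zero (hD i) (hE i), fun i j => ?_⟩
  rw [hN, hM, mul_inv]
  ring

theorem transpose {M N : Matrix m m K} (h : DiagSim M N) : DiagSim Mᵀ Nᵀ := by
  obtain ⟨D, hD, hN⟩ := h
  refine ⟨fun i => (D i)⁻¹, fun i => inv_ne_zero (hD i), fun i j => ?_⟩
  simp only [Matrix.transpose_apply, hN, inv_inv]
  ring

theorem cycle3_eq {M N : Matrix m m K} (h : DiagSim M N) (x y z : m) :
    cycle3 N x y z = cycle3 M x y z := by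
  obtain ⟨D, hD, hN⟩ := h
  simp only [cycle3, hN]
  field_simp [hD x, hD y, hD z]

end DiagSim

theorem diagSim_transpose_self [DecidableEq m] (M : Matrix m m K) (x₀ : m)
    (h₀ : ∀ p, p ≠ x₀ → M x₀ p ≠ 0 ∧ M p x₀ ≠ 0)
    (hcyc : ∀ p q, cycle3 M x₀ p q = cycle3 M x₀ q p) :
    DiagSim M Mᵀ := by
  simp only [cycle3] at hcyc
  refine ⟨fun p => if p = x₀ then 1 else M p x₀ / M x₀ p, fun p => ?_, fun p q => ?_⟩
  · by_cases hp : p = x₀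
    · simp [hp]
    · simpa [hp] using div_ne_zero (h₀ p hp).2 (h₀ p hp).1
  · rw [Matrix.transpose_apply]
    by_cases hp : p = x₀ <;> by_cases hq : q = x₀
    · simp [hp, hq]
    · simp only [hp, hq, if_true, if_false]; field_simp [(h₀ q hq).1]
    · simp only [hp, hq, if_true, if_false]; field_simp [(h₀ p hp).1, (h₀ p hp).2]
    · simp only [hp, hq, if_false]
      field_simp [(h₀ p hp).1, (h₀ p hp).2, (h₀ q hq).1]
      linear_combination -hcyc p q

theorem rank_subm_pair_le_one [DecidableEq m] (A : Matrix m m K) {p q r s : m}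
    (hpr : A p r ≠ 0) (h : A p r * A q s = A p s * A q r) :
    (subm A {p, q} {r, s}).rank ≤ 1 := by
  have : subm A {p, q} {r, s} =
      Matrix.vecMulVec (fun x => A x.1 r) (fun y => A p y.1 / A p r) := by
    ext ⟨x, hx⟩ ⟨y, hy⟩
    simp only [Finset.mem_insert, Finset.mem_singleton] at hx hy
    simp only [subm, Matrix.of_apply, Matrix.vecMulVec_apply]
    rcases hx with rfl | rfl <;> rcases hy with rfl | rfl <;> field_simp
    linear_combination h
  rw [this]
  exact Matrix.rank_vecMulVec_le _ _

end

section

variable [Field K] {n : ℕ} {A B : Matrix (Fin n) (Fin n) K} {i : Fin n}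

theorem cycle3_eq_of_mem_D1 (h : i ∈ D1 A B) {x y z : Fin n} (hx : x ≠ i) (hy : y ≠ i)
    (hz : z ≠ i) : cycle3 B x y z = cycle3 A x y z :=
  DiagSim.cycle3_eq h ⟨x, by simpa⟩ ⟨y, by simpa⟩ ⟨z, by simpa⟩

theorem cycle3_eq_of_mem_D2 (h : i ∈ D2 A B) {x y z : Fin n} (hx : x ≠ i) (hy : y ≠ i)
    (hz : z ≠ i) : cycle3 B x z y = cycle3 A x y z := by
  have := DiagSim.cycle3_eq h ⟨x, by simpa⟩ ⟨y, by simpa⟩ ⟨z, by simpa⟩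
  simp only [cycle3, subm, Matrix.transpose_apply, Matrix.of_apply] at this ⊢
  linear_combination this

theorem diagSim_subm_transpose_self (hA : ∀ p q, p ≠ q → A p q ≠ 0) {x y z : Fin n}
    (hall : ∀ p, p = i ∨ p = x ∨ p = y ∨ p = z) (hx : x ≠ i)
    (hcyc : cycle3 A x y z = cycle3 A x z y) :
    DiagSim (subm A {i}ᶜ {i}ᶜ) (subm A {i}ᶜ {i}ᶜ)ᵀ := by
  refine diagSim_transpose_self _ ⟨x, by simpa⟩ (fun p hp => ?_) fun p q => ?_
  · have hpx : p.1 ≠ x := fun h => hp (Subtype.ext h)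
    exact ⟨hA _ _ hpx.symm, hA _ _ hpx⟩
  · have hp := (hall p.1).resolve_left fun h => Finset.mem_compl.1 p.2 (Finset.mem_singleton.2 h)
    have hq := (hall q.1).resolve_left fun h => Finset.mem_compl.1 q.2 (Finset.mem_singleton.2 h)
    simp only [cycle3, subm, Matrix.of_apply] at hcyc ⊢
    rcases hp with hp | hp | hp <;> rcases hq with hq | hq | hq <;> rw [hp, hq] <;>
      first | exact hcyc | exact hcyc.symm | ring

theorem mem_D2_of_mem_D1 (hA : ∀ p q, p ≠ q → A p q ≠ 0) {x y z : Fin n}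
    (hall : ∀ p, p = i ∨ p = x ∨ p = y ∨ p = z) (hx : x ≠ i)
    (hcyc : cycle3 A x y z = cycle3 A x z y) (h : i ∈ D1 A B) : i ∈ D2 A B :=
  (diagSim_subm_transpose_self hA hall hx hcyc).trans h.transpose

theorem mem_D1_of_mem_D2 (hA : ∀ p q, p ≠ q → A p q ≠ 0) {x y z : Fin n}
    (hall : ∀ p, p = i ∨ p = x ∨ p = y ∨ p = z) (hx : x ≠ i)
    (hcyc : cycle3 A x y z = cycle3 A x z y) (h : i ∈ D2 A B) : i ∈ D1 A B := by
  have := (diagSim_subm_transpose_self hA hall hx hcyc).trans h.transpose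
  rwa [Matrix.transpose_transpose] at this

end

theorem exists_perm_eq_pair (X : Finset (Fin 4)) (hX : X.card = 2) :
    ∃ σ : Equiv.Perm (Fin 4), X = {σ 0, σ 1} := by
  revert X; decide

theorem eq_perm_fin_four_apply (σ : Equiv.Perm (Fin 4)) (p : Fin 4) :
    p = σ 0 ∨ p = σ 1 ∨ p = σ 2 ∨ p = σ 3 := by
  obtain ⟨a, rfl⟩ := σ.surjective p
  fin_cases a <;> simp

section

variable [Field K]

/-- The cycle data make `B` diagonally similar to `A` with `A 1 2`, `A 1 3` multiplied and
`A 2 1`, `A 3 1` divided by `cycle3 A 0 3 1 / cycle3 A 0 1 3`; only the terms of the determinant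
passing both between `0` and `1` and between `1` and `{2, 3}` feel this factor. -/
theorem det_sub_det_of_cycle3 (A B : Matrix (Fin 4) (Fin 4) K) (hA : ∀ p q, p ≠ q → A p q ≠ 0)
    (hdiag : ∀ p, B p p = A p p) (hswap : ∀ p q, B p q * B q p = A p q * A q p)
    (h123 : cycle3 B 1 2 3 = cycle3 A 1 2 3) (h023 : cycle3 B 0 2 3 = cycle3 A 0 2 3)
    (h013 : cycle3 B 0 1 3 = cycle3 A 0 3 1) :
    B.det - A.det = (cycle3 A 0 3 1 - cycle3 A 0 1 3) * A 0 1 * A 1 0 *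
      (A 2 3 * A 3 0 * A 3 1 * (A 0 2 * A 1 3 - A 0 3 * A 1 2)
        - A 0 3 * A 1 3 * A 3 2 * (A 2 0 * A 3 1 - A 2 1 * A 3 0)
        + A 3 3 * (A 0 3 * A 1 2 * (A 2 0 * A 3 1) - A 0 2 * A 1 3 * (A 2 1 * A 3 0)))
      / (cycle3 A 0 1 3 * cycle3 A 0 3 1) := by
  simp only [cycle3] at *
  have hB : ∀ p q, p ≠ q → B p q ≠ 0 := fun p q hpq h =>
    mul_ne_zero (hA p q hpq) (hA q p (Ne.symm hpq)) (by rw [← hswap, h, zero_mul])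
  have hlow : ∀ p q, p ≠ q → B q p = A p q * A q p / B p q := fun p q hpq => by
    rw [← hswap, mul_div_cancel_left₀ _ (hB p q hpq)]
  have h23 : B 2 3 = A 0 2 * A 2 3 * B 0 3 / (A 0 3 * B 0 2) := by
    rw [eq_div_iff (mul_ne_zero (hA 0 3 (by decide)) (hB 0 2 (by decide)))]
    apply mul_right_cancel₀ (hB 3 0 (by decide))
    linear_combination A 0 3 * h023 - A 0 2 * A 2 3 * hswap 0 3
  have h13 : B 1 3 = A 1 0 * A 3 1 * B 0 3 / (A 3 0 * B 0 1) := by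
    rw [eq_div_iff (mul_ne_zero (hA 3 0 (by decide)) (hB 0 1 (by decide)))]
    apply mul_right_cancel₀ (hB 3 0 (by decide))
    linear_combination A 3 0 * h013 - A 1 0 * A 3 1 * hswap 0 3
  have h12 : B 1 2 = A 1 2 * A 2 3 * A 3 1 / (B 2 3 * B 3 1) := by
    rw [eq_div_iff (mul_ne_zero (hB 2 3 (by decide)) (hB 3 1 (by decide)))]
    linear_combination h123
  rw [det_fin_four, det_fin_four]
  simp only [hdiag, hlow 0 1 (by decide), hlow 0 2 (by decide), hlow 0 3 (by decide),
    hlow 1 2 (by decide), hlow 1 3 (by decide), hlow 2 3 (by decide), h12, h13, h23]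
  field_simp [hA, hB]
  ring

theorem offDiag_blocks_singular_of_cycle3 (A B : Matrix (Fin 4) (Fin 4) K)
    (hA : ∀ p q, p ≠ q → A p q ≠ 0) (hPME : PME A B)
    (h123 : cycle3 B 1 2 3 = cycle3 A 1 2 3) (h023 : cycle3 B 0 2 3 = cycle3 A 0 2 3)
    (h013 : cycle3 B 0 1 3 = cycle3 A 0 3 1) (h012 : cycle3 B 0 1 2 = cycle3 A 0 2 1)
    (hE : cycle3 A 1 2 3 ≠ cycle3 A 1 3 2) (hC : cycle3 A 0 1 3 ≠ cycle3 A 0 3 1) :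
    A 0 2 * A 1 3 = A 0 3 * A 1 2 ∧ A 2 0 * A 3 1 = A 2 1 * A 3 0 := by
  have hdet := det_sub_det_of_cycle3 A B hA hPME.diag_eq hPME.mul_swap_eq h123 h023 h013
  -- rewritten in terms of `B`, both sides are products of the same eight entries
  have hcons : cycle3 A 0 2 1 * cycle3 A 0 2 3 * (A 1 3 * A 3 1) =
      A 0 2 * A 2 0 * cycle3 A 0 3 1 * cycle3 A 1 2 3 := by
    rw [← h012, ← h023, ← hPME.mul_swap_eq, ← hPME.mul_swap_eq, ← h013, ← h123]
    simp only [cycle3]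
    ring
  simp only [cycle3] at hdet hcons hE hC
  rw [hPME.det_eq, sub_self, eq_comm, div_eq_zero_iff] at hdet
  have hgh : A 0 2 * A 1 3 * (A 2 1 * A 3 0) = A 0 3 * A 1 2 * (A 2 0 * A 3 1) := by
    apply mul_left_cancel₀ (show A 0 2 * A 1 0 * A 2 3 * A 3 1 ≠ 0 by simp [hA])
    linear_combination hcons
  have hinner : A 2 3 * A 3 0 * A 3 1 * (A 0 2 * A 1 3 - A 0 3 * A 1 2)
      - A 0 3 * A 1 3 * A 3 2 * (A 2 0 * A 3 1 - A 2 1 * A 3 0)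
      + A 3 3 * (A 0 3 * A 1 2 * (A 2 0 * A 3 1) - A 0 2 * A 1 3 * (A 2 1 * A 3 0)) = 0 := by
    simpa [hA, sub_eq_zero, Ne.symm hC] using hdet
  have key : A 3 0 * (A 0 2 * A 1 3 - A 0 3 * A 1 2) *
      (A 1 2 * A 2 3 * A 3 1 - A 1 3 * A 3 2 * A 2 1) = 0 := by
    linear_combination A 1 2 * hinner - (A 1 3 * A 3 2 - A 1 2 * A 3 3) * hgh
  have hg : A 0 2 * A 1 3 = A 0 3 * A 1 2 := by
    simpa [hA, sub_eq_zero, hE] using key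
  refine ⟨hg, ?_⟩
  rw [hg] at hgh
  linear_combination (mul_left_cancel₀ (show A 0 3 * A 1 2 ≠ 0 by simp [hA]) hgh).symm

theorem isCut_pair (A : Matrix (Fin 4) (Fin 4) K) (σ : Equiv.Perm (Fin 4))
    (h₀₂ : A (σ 0) (σ 2) ≠ 0) (h₂₀ : A (σ 2) (σ 0) ≠ 0)
    (hup : A (σ 0) (σ 2) * A (σ 1) (σ 3) = A (σ 0) (σ 3) * A (σ 1) (σ 2))
    (hlow : A (σ 2) (σ 0) * A (σ 3) (σ 1) = A (σ 2) (σ 1) * A (σ 3) (σ 0)) :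
    IsCut A {σ 0, σ 1} := by
  have hc : Finset.univ \ {σ 0, σ 1} = {σ 2, σ 3} := by
    ext p; obtain ⟨a, rfl⟩ := σ.surjective p; fin_cases a <;> simp
  have hcard : ({σ 0, σ 1} : Finset (Fin 4)).card = 2 :=
    Finset.card_pair (σ.injective.ne (by decide))
  refine ⟨Finset.subset_univ _, hcard.ge, by simp [hcard], ?_, ?_⟩ <;> rw [hc]
  · exact rank_subm_pair_le_one A h₀₂ hup
  · exact rank_subm_pair_le_one A h₂₀ hlow

theorem offDiag_blocks_singular_of_perm (A B : Matrix (Fin 4) (Fin 4) K)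
    (hA : ∀ p q, p ≠ q → A p q ≠ 0) (hPME : PME A B) (σ : Equiv.Perm (Fin 4))
    (h₀ : σ 0 ∈ D1 A B) (h₁ : σ 1 ∈ D1 A B) (h₂ : σ 2 ∈ D2 A B) (h₃ : σ 3 ∈ D2 A B)
    (h₀' : σ 0 ∉ D2 A B) (h₂' : σ 2 ∉ D1 A B) :
    A (σ 0) (σ 2) * A (σ 1) (σ 3) = A (σ 0) (σ 3) * A (σ 1) (σ 2) ∧
      A (σ 2) (σ 0) * A (σ 3) (σ 1) = A (σ 2) (σ 1) * A (σ 3) (σ 0) := by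
  have ne : ∀ {a b : Fin 4}, a ≠ b → σ a ≠ σ b := σ.injective.ne
  have hall₂ : ∀ p, p = σ 2 ∨ p = σ 0 ∨ p = σ 1 ∨ p = σ 3 := fun p => by
    rcases eq_perm_fin_four_apply σ p with h | h | h | h <;> simp [h]
  refine offDiag_blocks_singular_of_cycle3 (A.submatrix σ σ) (B.submatrix σ σ)
    (fun p q h => hA _ _ (ne h)) (hPME.submatrix σ) ?_ ?_ ?_ ?_ ?_ ?_
  · exact cycle3_eq_of_mem_D1 h₀ (ne (by decide)) (ne (by decide)) (ne (by decide))
  · exact cycle3_eq_of_mem_D1 h₁ (ne (by decide)) (ne (by decide)) (ne (by decide))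
  · exact cycle3_eq_of_mem_D2 h₂ (ne (by decide)) (ne (by decide)) (ne (by decide))
  · exact cycle3_eq_of_mem_D2 h₃ (ne (by decide)) (ne (by decide)) (ne (by decide))
  · exact fun hE => h₀' (mem_D2_of_mem_D1 hA (eq_perm_fin_four_apply σ) (ne (by decide)) hE h₀)
  · exact fun hC => h₂' (mem_D1_of_mem_D2 hA hall₂ (ne (by decide)) hC h₂)

end

/-- For `4×4` principal minor equivalent matrices with
`D₁(A,B) = X` and `D₂(A,B) = X̄` (`|X| = 2`), the set `X` is a cut of `A`. -/
theorem cut_of_d1_d2_partition_four {K : Type*} [Field K]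
    (A B : Matrix (Fin 4) (Fin 4) K)
    (hA : ∀ i j : Fin 4, i ≠ j → A i j ≠ 0)
    (hPME : PME A B)
    (X : Finset (Fin 4)) (hX : X.card = 2)
    (hD1 : D1 A B = (X : Set (Fin 4)))
    (hD2 : D2 A B = ((Xᶜ : Finset (Fin 4)) : Set (Fin 4))) :
    IsCut A X := by
  obtain ⟨σ, rfl⟩ := exists_perm_eq_pair X hX
  obtain ⟨hup, hlow⟩ := offDiag_blocks_singular_of_perm A B hA hPME σ
    (by simp [hD1]) (by simp [hD1]) (by simp [hD2]) (by simp [hD2]) (by simp [hD2])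
    (by simp [hD1])
  exact isCut_pair A σ (hA _ _ (σ.injective.ne (by decide))) (hA _ _ (σ.injective.ne (by decide)))
    hup hlow

end PMAP
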